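/- arXiv:2111.07409 — 6 statements merged into one kernel-verified Lean document; each statement's English description precedes it below -/
import Mathlib

section
/- Let M be a symmetric n×n integer matrix and P an arbitrary n×n integer matrix, and let P̄ denote the reduction of P modulo 2. Then for every v ∈ (ℤ/2)ⁿ, q_{PᵀMP}(v) ≡ q_M(P̄·v) (mod 4), where both sides are computed using the coordinatewise {0,1}-valued lifts of the respective mod-2 vectors. -/
open Matrix

/-- The `{0,1}`-valued integer lift of a mod-2 vector. -/
def zlift {ι : Type*} (v : ι → ZMod 2) : ι → ℤ := fun i => ((v i).val : ℤ)

/-- The integral quadratic form `q_M(v) = ṽᵀ M ṽ` evaluated on the `{0,1}` lift of `v`. -/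
def qForm {ι : Type*} [Fintype ι] (M : Matrix ι ι ℤ) (v : ι → ZMod 2) : ℤ :=
  ∑ i, ∑ j, zlift v i * M i j * zlift v j

lemma qForm_eq_dot {ι : Type*} [Fintype ι] (M : Matrix ι ι ℤ) (v : ι → ZMod 2) :
    qForm M v = zlift v ⬝ᵥ M *ᵥ zlift v := by
  simp [qForm, dotProduct, mulVec, Finset.mul_sum, mul_assoc]

lemma key {ι : Type*} [Fintype ι] (m : Matrix ι ι (ZMod 4))
    (hm : ∀ i j, m i j = m j i) (b c : ι → ZMod 4) :
    ∑ i, ∑ j, (b i + 2 * c i) * m i j * (b j + 2 * c j)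
      = ∑ i, ∑ j, b i * m i j * b j := by
  have h1 : ∀ i j, (b i + 2 * c i) * m i j * (b j + 2 * c j)
      = b i * m i j * b j + 2 * (c i * m i j * b j) + 2 * (b i * m i j * c j)
        + 4 * (c i * m i j * c j) := by intros; ring
  simp only [h1, Finset.sum_add_distrib, ← Finset.mul_sum]
  have hswap : ∑ i, ∑ j, c i * m i j * b j = ∑ i, ∑ j, b i * m i j * c j := by
    rw [Finset.sum_comm]
    refine Finset.sum_congr rfl fun i _ => Finset.sum_congr rfl fun j _ => ?_
    rw [hm j i]; ring
  rw [hswap]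
  have h4 : (4 : ZMod 4) = 0 := rfl
  linear_combination ((∑ i, ∑ j, b i * m i j * c j) + (∑ i, ∑ j, c i * m i j * c j)) * h4

/-- For a symmetric integer matrix `M` and an arbitrary integer matrix `P`,
`q_{PᵀMP}(v) ≡ q_M(P̄ v) (mod 4)` for every `v ∈ (ℤ/2)ⁿ`, where `P̄` is `P` reduced mod 2. -/
theorem qForm_congr_mod_four {n : ℕ} (M P : Matrix (Fin n) (Fin n) ℤ)
    (hM : M.IsSymm) (v : Fin n → ZMod 2) :
    ((qForm (Pᵀ * M * P) v : ℤ) : ZMod 4)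
      = ((qForm M ((P.map (Int.cast : ℤ → ZMod 2)).mulVec v) : ℤ) : ZMod 4) := by
  set w : Fin n → ℤ := zlift v with hw
  set x : Fin n → ℤ := P *ᵥ w with hx
  set u : Fin n → ℤ := zlift ((P.map (Int.cast : ℤ → ZMod 2)) *ᵥ v) with hu
  have hL : qForm (Pᵀ * M * P) v = ∑ i, ∑ j, x i * M i j * x j := by
    rw [qForm_eq_dot, ← hw]
    rw [← mulVec_mulVec, ← mulVec_mulVec, dotProduct_mulVec, vecMul_transpose, ← hx]
    simp [dotProduct, mulVec, Finset.mul_sum, mul_assoc]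
  have hR : qForm M ((P.map (Int.cast : ℤ → ZMod 2)) *ᵥ v) = ∑ i, ∑ j, u i * M i j * u j := by
    rw [qForm_eq_dot, ← hu]
    simp [dotProduct, mulVec, Finset.mul_sum, mul_assoc]
  -- mod 2 congruence between x and u
  have hmod : ∀ k, ∃ d : ℤ, x k = u k + 2 * d := by
    intro k
    have h2 : ((x k : ℤ) : ZMod 2) = ((u k : ℤ) : ZMod 2) := by
      have h3 : ((u k : ℤ) : ZMod 2) = ((P.map (Int.cast : ℤ → ZMod 2)) *ᵥ v) k := by
        simp [hu, zlift]
      rw [h3]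
      simp [hx, hw, mulVec, dotProduct, zlift, Matrix.map_apply]
    have hmq := (ZMod.intCast_eq_intCast_iff _ _ _).mp h2
    obtain ⟨e, he⟩ := Int.ModEq.dvd hmq
    refine ⟨-e, by push_cast at he ⊢; linarith⟩
  choose d hd using hmod
  rw [hL, hR]
  push_cast
  have : ∀ k, ((x k : ℤ) : ZMod 4) = ((u k : ℤ) : ZMod 4) + 2 * ((d k : ℤ) : ZMod 4) := by
    intro k; rw [hd k]; push_cast; ring
  simp only [this]
  exact key (Matrix.of fun i j => ((M i j : ℤ) : ZMod 4))
    (fun i j => by simp only [Matrix.of_apply]; rw [hM.apply j i])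
    (fun k => ((u k : ℤ) : ZMod 4)) (fun k => ((d k : ℤ) : ZMod 4))
end

section
/- Let M be a symmetric n×n integer matrix and let P be an n×n integer matrix with det P = 1 or det P = −1 (i.e., M and PᵀMP are unimodular congruent). Then the Monsky sums of M and of PᵀMP are equal: λ(PᵀMP) = λ(M). In particular, the Brown invariants of the associated ℤ/4 quadratic enhancements φ_M and φ_{PᵀMP} coincide. -/
open Matrix

/-- The Monsky sum `λ(M) = Σ_{v ∈ (ℤ/2)ⁿ} i^{q_M(v)}`. -/
noncomputable def monsky {ι : Type*} [Fintype ι] [DecidableEq ι] (M : Matrix ι ι ℤ) : ℂ :=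
  ∑ v : ι → ZMod 2, Complex.I ^ qForm M v

lemma I_zpow_congr {a b : ℤ} (h : (4 : ℤ) ∣ (a - b)) :
    Complex.I ^ a = Complex.I ^ b := by
  obtain ⟨k, hk⟩ := h
  have ha : a = b + 4 * k := by linarith
  have h4 : Complex.I ^ (4 : ℤ) = 1 := by
    rw [show (4 : ℤ) = ((4 : ℕ) : ℤ) by norm_num, zpow_natCast, Complex.I_pow_four]
  rw [ha, zpow_add₀ Complex.I_ne_zero, _root_.zpow_mul, h4, _root_.one_zpow, mul_one]

lemma dot_symm {ι : Type*} [Fintype ι] {M : Matrix ι ι ℤ} (hM : M.IsSymm)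
    (u d : ι → ℤ) : u ⬝ᵥ M *ᵥ d = d ⬝ᵥ M *ᵥ u := by
  rw [dotProduct_mulVec, ← mulVec_transpose, hM.eq, dotProduct_comm]

lemma quad_congr {ι : Type*} [Fintype ι] {M : Matrix ι ι ℤ} (hM : M.IsSymm)
    (w u : ι → ℤ) (h : ∀ i, ((w i : ZMod 2)) = ((u i : ZMod 2))) :
    (4 : ℤ) ∣ (w ⬝ᵥ M *ᵥ w - u ⬝ᵥ M *ᵥ u) := by
  have h2 : ∀ i, (2 : ℤ) ∣ (w i - u i) := by
    intro i
    have : ((w i - u i : ℤ) : ZMod 2) = 0 := by push_cast [h i]; ring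
    exact (ZMod.intCast_zmod_eq_zero_iff_dvd _ 2).1 this
  set d : ι → ℤ := fun i => (w i - u i) / 2 with hd
  have hw : w = u + (2 : ℤ) • d := by
    funext i
    have := Int.ediv_mul_cancel (h2 i)
    simp only [hd, Pi.add_apply, Pi.smul_apply, smul_eq_mul]
    omega
  refine ⟨d ⬝ᵥ M *ᵥ u + d ⬝ᵥ M *ᵥ d, ?_⟩
  rw [hw]
  have hsym := dot_symm hM (u) d
  simp only [mulVec_add, dotProduct_add, add_dotProduct, mulVec_smul,
    dotProduct_smul, smul_dotProduct, smul_eq_mul]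
  rw [hsym]
  ring

/-- If `M` is a symmetric integer matrix and `P` is an integer matrix with
`det P = ±1`, then the Monsky sums of `M` and `PᵀMP` agree; in particular the Brown
invariants of the associated `ℤ/4`-quadratic enhancements coincide. -/
theorem monsky_unimodular_congruent {n : ℕ} (M P : Matrix (Fin n) (Fin n) ℤ)
    (hM : M.IsSymm) (hP : P.det = 1 ∨ P.det = -1) :
    monsky (Pᵀ * M * P) = monsky M := by
  classical
  set Pb : Matrix (Fin n) (Fin n) (ZMod 2) := P.map (Int.cast) with hPb
  have hdet : IsUnit Pb.det := by
    have : Pb.det = ((P.det : ℤ) : ZMod 2) := (RingHom.map_det (Int.castRingHom (ZMod 2)) P).symm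
    rcases hP with h | h <;> rw [this, h] <;> decide
  have hbij : Function.Bijective (Pb.mulVec) := by
    have := hdet
    rw [← Matrix.isUnit_iff_isUnit_det] at this
    exact ⟨Matrix.mulVec_injective_iff_isUnit.2 this,
      Matrix.mulVec_surjective_iff_isUnit.2 this⟩
  have key : ∀ v : Fin n → ZMod 2,
      Complex.I ^ qForm (Pᵀ * M * P) v = Complex.I ^ qForm M (Pb *ᵥ v) := by
    intro v
    apply I_zpow_congr
    rw [qForm_eq_dot, qForm_eq_dot]
    have h1 : zlift v ⬝ᵥ (Pᵀ * M * P) *ᵥ zlift v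
        = (P *ᵥ zlift v) ⬝ᵥ M *ᵥ (P *ᵥ zlift v) := by
      rw [← mulVec_mulVec, ← mulVec_mulVec, dotProduct_mulVec, vecMul_transpose]
    rw [h1]
    apply quad_congr hM
    intro i
    have hl : ∀ (w : Fin n → ZMod 2) (j : Fin n), ((zlift w j : ℤ) : ZMod 2) = w j := by
      intro w j
      simp [zlift, ZMod.natCast_val, ZMod.intCast_cast, ZMod.cast_id]
    calc ((P *ᵥ zlift v) i : ZMod 2) = (Pb *ᵥ (fun j => ((zlift v j : ℤ) : ZMod 2))) i := by
          simp [mulVec, dotProduct, Pb]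
      _ = (Pb *ᵥ v) i := by simp only [hl]
      _ = ((zlift (Pb *ᵥ v) i : ℤ) : ZMod 2) := (hl _ i).symm
  unfold monsky
  rw [Finset.sum_congr rfl (fun v _ => key v)]
  exact Fintype.sum_bijective _ hbij _ _ (fun v => rfl)
end

section
/- Let R be a commutative ring, g ≥ 0, and let A, B be g×g matrices over R. In the polynomial ring R[x], the determinant of the 2g×2g block matrix [[x·I_g, Ā], [Āᵀ, B̄]] over R[x] equals det(x·B̄ − Āᵀ·Ā), where Ā, Āᵀ, B̄ denote the images of A, Aᵀ, B under the coefficient embedding R → R[x] applied entrywise, and I_g is the g×g identity matrix. -/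
open Matrix Polynomial

/-- For `g×g` matrices `A, B` over a commutative ring `R`, in `R[x]` we have
`det [[x·I, Ā], [Āᵀ, B̄]] = det (x·B̄ − Āᵀ·Ā)`, where bars denote the entrywise image under
the coefficient embedding `R → R[x]`. -/
theorem det_fromBlocks_scalar_upper_left (R : Type*) [CommRing R] (g : ℕ)
    (A B : Matrix (Fin g) (Fin g) R) :
    (Matrix.fromBlocks ((X : R[X]) • (1 : Matrix (Fin g) (Fin g) R[X]))
        (A.map C) (Aᵀ.map C) (B.map C)).det
      = ((X : R[X]) • (B.map C) - (Aᵀ.map C) * (A.map C)).det := by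
  set Ab := A.map (C : R →+* R[X]) with hA
  set Atb := Aᵀ.map (C : R →+* R[X])
  set Bb := B.map (C : R →+* R[X])
  set M := Matrix.fromBlocks ((X : R[X]) • (1 : Matrix (Fin g) (Fin g) R[X])) Ab Atb Bb
  set N := Matrix.fromBlocks ((X : R[X]) • (1 : Matrix (Fin g) (Fin g) R[X])) (-Ab)
      (0 : Matrix (Fin g) (Fin g) R[X]) ((X : R[X]) • (1 : Matrix (Fin g) (Fin g) R[X]))
  have hMN : M * N = Matrix.fromBlocks (((X : R[X]) * X) • (1 : Matrix (Fin g) (Fin g) R[X]))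
      0 ((X : R[X]) • Atb) ((X : R[X]) • Bb - Atb * Ab) := by
    simp [M, N, Matrix.fromBlocks_multiply, Matrix.smul_mul, Matrix.mul_smul, smul_smul,
      sub_eq_neg_add, add_comm]
  have hdetN : N.det = (X : R[X]) ^ g * (X : R[X]) ^ g := by
    simp [N, Matrix.det_fromBlocks_zero₂₁, Matrix.det_smul]
  have hdetMN : M.det * ((X : R[X]) ^ g * (X : R[X]) ^ g)
      = (X : R[X]) ^ g * (X : R[X]) ^ g * ((X : R[X]) • Bb - Atb * Ab).det := by
    have := congrArg Matrix.det hMN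
    rw [Matrix.det_mul, hdetN] at this
    rw [this, Matrix.det_fromBlocks_zero₁₂, Matrix.det_smul]
    simp [mul_pow, mul_comm, mul_assoc]
  have hreg : IsRegular ((X : R[X]) ^ g * (X : R[X]) ^ g) :=
    ((monic_X.pow g).mul (monic_X.pow g)).isRegular
  apply hreg.left
  show (X : R[X]) ^ g * (X : R[X]) ^ g * M.det
      = (X : R[X]) ^ g * (X : R[X]) ^ g * ((X : R[X]) • Bb - Atb * Ab).det
  linear_combination hdetMN
end

section
/- Let g ≥ 0, let B be a symmetric 2g×2g integer matrix, and let J_g be the standard symplectic 2g×2g integer matrix. Then the Monsky sum of the symmetric 4g×4g block matrix N = [[B, J_g], [J_gᵀ, 0]] equals 4^g, i.e., λ(N) = 4^g. (Equivalently, the quadratic enhancement φ_N is nonsingular and metabolic, and its Brown invariant is 0.) -/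
open Matrix

/-- The standard symplectic `2g×2g` integer matrix `J_g = [[0, I], [-I, 0]]`. -/
def symplecticJ (g : ℕ) : Matrix (Fin g ⊕ Fin g) (Fin g ⊕ Fin g) ℤ :=
  Matrix.fromBlocks 0 1 (-1) 0

/-- coefficient vector of the pairing -/
def cJ (g : ℕ) (x : Fin g ⊕ Fin g → ZMod 2) (b : Fin g ⊕ Fin g) : ℤ :=
  ∑ a, zlift x a * symplecticJ g a b

/-- the integral cross pairing -/
def SJ (g : ℕ) (x y : Fin g ⊕ Fin g → ZMod 2) : ℤ :=
  ∑ a, ∑ b, zlift x a * symplecticJ g a b * zlift y b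

lemma neg_one_zpow_sum {α : Type*} (s : Finset α) (f : α → ℤ) :
    ((-1 : ℂ)) ^ (∑ i ∈ s, f i) = ∏ i ∈ s, ((-1:ℂ)) ^ f i := by
  induction s using Finset.cons_induction with
  | empty => simp
  | cons a s ha ih =>
    rw [Finset.sum_cons, Finset.prod_cons, zpow_add₀ (by norm_num), ih]

lemma zmod2_sum (f : ZMod 2 → ℂ) : ∑ t, f t = f 0 + f 1 := by
  rw [show (Finset.univ : Finset (ZMod 2)) = {0,1} by decide]
  simp

lemma zmod2_ne_zero : ∀ t : ZMod 2, t ≠ 0 → t = 1 := by decide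

lemma zmod2_val_zero : (((0 : ZMod 2)).val : ℤ) = 0 := rfl
lemma zmod2_val_one : (((1 : ZMod 2)).val : ℤ) = 1 := rfl

/-- quadratic form of a metabolic block matrix, abstract index version -/
lemma qForm_fromBlocks {α : Type*} [Fintype α] (P Q : Matrix α α ℤ)
    (x y : α → ZMod 2) :
    qForm (Matrix.fromBlocks P Q Qᵀ 0) (Sum.elim x y)
      = qForm P x + 2 * ∑ a, ∑ b, zlift x a * Q a b * zlift y b := by
  have cross : ∑ a, ∑ b, zlift y a * Q b a * zlift x b
      = ∑ a, ∑ b, zlift x a * Q a b * zlift y b := by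
    rw [Finset.sum_comm]
    exact Finset.sum_congr rfl fun b _ => Finset.sum_congr rfl fun a _ => by ring
  simp only [qForm, Fintype.sum_sum_type, Matrix.fromBlocks_apply₁₁,
    Matrix.fromBlocks_apply₁₂, Matrix.fromBlocks_apply₂₁, Matrix.fromBlocks_apply₂₂,
    Matrix.transpose_apply, Matrix.zero_apply, mul_zero, zero_mul,
    Finset.sum_const_zero, add_zero, Sum.elim_inl, Sum.elim_inr]
  show (∑ a, (∑ b, zlift x a * P a b * zlift x b + ∑ b, zlift x a * Q a b * zlift y b))
      + (∑ a, ∑ b, zlift y a * Q b a * zlift x b)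
    = qForm P x + 2 * ∑ a, ∑ b, zlift x a * Q a b * zlift y b
  rw [Finset.sum_add_distrib, cross, qForm, two_mul]
  ring

lemma SJ_eq (g : ℕ) (x y : Fin g ⊕ Fin g → ZMod 2) :
    SJ g x y = ∑ b, cJ g x b * zlift y b := by
  rw [SJ, Finset.sum_comm]
  exact Finset.sum_congr rfl fun b _ => (Finset.sum_mul ..).symm

lemma cJ_inl (g : ℕ) (x : Fin g ⊕ Fin g → ZMod 2) (k : Fin g) :
    cJ g x (Sum.inl k) = -zlift x (Sum.inr k) := by
  rw [cJ, Fintype.sum_sum_type]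
  simp [symplecticJ, Matrix.one_apply, mul_ite, Finset.sum_ite_eq']

lemma cJ_inr (g : ℕ) (x : Fin g ⊕ Fin g → ZMod 2) (k : Fin g) :
    cJ g x (Sum.inr k) = zlift x (Sum.inl k) := by
  rw [cJ, Fintype.sum_sum_type]
  simp [symplecticJ, Matrix.one_apply, mul_ite, Finset.sum_ite_eq']

lemma I_zpow_two : Complex.I ^ (2:ℤ) = -1 := by
  rw [zpow_two, Complex.I_mul_I]

/-- For any symmetric `2g×2g` integer matrix `B`, the Monsky sum of the
metabolic block matrix `[[B, J_g], [J_gᵀ, 0]]` equals `4^g`. -/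
theorem monsky_metabolic (g : ℕ) (B : Matrix (Fin g ⊕ Fin g) (Fin g ⊕ Fin g) ℤ)
    (hB : B.IsSymm) :
    monsky (Matrix.fromBlocks B (symplecticJ g) (symplecticJ g)ᵀ 0) = 4 ^ g := by
  classical
  set J : Matrix (Fin g ⊕ Fin g) (Fin g ⊕ Fin g) ℤ := symplecticJ g with hJ
  -- Step 1: split the sum over (ι ⊕ ι) → ZMod 2
  have h1 : monsky (Matrix.fromBlocks B J Jᵀ 0)
      = ∑ x : Fin g ⊕ Fin g → ZMod 2, ∑ y : Fin g ⊕ Fin g → ZMod 2,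
          Complex.I ^ qForm (Matrix.fromBlocks B J Jᵀ 0) (Sum.elim x y) := by
    rw [monsky, ← (Equiv.sumArrowEquivProdArrow _ _ (ZMod 2)).symm.sum_comp,
      Fintype.sum_prod_type]
    rfl
  -- Step 2: the quadratic form splits
  have h2 : ∀ x y : Fin g ⊕ Fin g → ZMod 2,
      qForm (Matrix.fromBlocks B J Jᵀ 0) (Sum.elim x y) = qForm B x + 2 * SJ g x y :=
    fun x y => qForm_fromBlocks B J x y
  -- Step 4: the inner sum over y
  have h4 : ∀ x : Fin g ⊕ Fin g → ZMod 2,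
      ∑ y : Fin g ⊕ Fin g → ZMod 2, ((-1:ℂ)) ^ (SJ g x y)
        = ∏ b, (1 + (-1:ℂ) ^ (cJ g x b)) := by
    intro x
    have key : ∀ y : Fin g ⊕ Fin g → ZMod 2, ((-1:ℂ)) ^ (SJ g x y)
        = ∏ b, ((-1:ℂ) ^ (cJ g x b)) ^ (((y b).val : ℤ)) := by
      intro y
      rw [SJ_eq, neg_one_zpow_sum]
      exact Finset.prod_congr rfl fun b _ => _root_.zpow_mul _ _ _
    simp_rw [key]
    rw [← Fintype.prod_sum (fun b (t : ZMod 2) => ((-1:ℂ) ^ (cJ g x b)) ^ ((t.val : ℤ)))]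
    refine Finset.prod_congr rfl fun b _ => ?_
    rw [zmod2_sum]
    rw [zmod2_val_zero, zmod2_val_one, zpow_zero, zpow_one]
  -- the product vanishes unless x = 0
  have h5 : ∀ x : Fin g ⊕ Fin g → ZMod 2, x ≠ 0 →
      ∏ b, (1 + (-1:ℂ) ^ (cJ g x b)) = 0 := by
    intro x hx
    obtain ⟨a, ha⟩ := Function.ne_iff.mp hx
    have hone : x a = 1 := zmod2_ne_zero _ ha
    have hval : ((x a).val : ℤ) = 1 := by rw [hone]; rfl
    rcases a with k | k
    · refine Finset.prod_eq_zero (Finset.mem_univ (Sum.inr k)) ?_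
      rw [cJ_inr]
      show 1 + (-1:ℂ) ^ (((x (Sum.inl k)).val : ℤ)) = 0
      rw [hval, zpow_one]; ring
    · refine Finset.prod_eq_zero (Finset.mem_univ (Sum.inl k)) ?_
      rw [cJ_inl]
      show 1 + (-1:ℂ) ^ (-((x (Sum.inr k)).val : ℤ)) = 0
      rw [hval]
      norm_num
  -- assemble
  rw [h1]
  have h6 : ∀ x y : Fin g ⊕ Fin g → ZMod 2,
      Complex.I ^ qForm (Matrix.fromBlocks B J Jᵀ 0) (Sum.elim x y)
        = Complex.I ^ qForm B x * ((-1:ℂ)) ^ (SJ g x y) := by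
    intro x y
    rw [h2, zpow_add₀ Complex.I_ne_zero, _root_.zpow_mul, I_zpow_two]
  simp_rw [h6, ← Finset.mul_sum]
  rw [Finset.sum_eq_single (0 : Fin g ⊕ Fin g → ZMod 2)]
  · have hq0 : qForm B 0 = 0 := by simp [qForm, zlift]
    have hc0 : ∀ b, cJ g (0 : Fin g ⊕ Fin g → ZMod 2) b = 0 := by
      intro b
      rcases b with k | k
      · rw [cJ_inl]; simp [zlift]
      · rw [cJ_inr]; simp [zlift]
    rw [h4, hq0]
    simp only [hc0, zpow_zero]
    rw [one_mul, Finset.prod_const, Finset.card_univ]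
    simp only [Fintype.card_sum, Fintype.card_fin]
    have h11 : ((1:ℂ) + 1) = 2 := by norm_num
    rw [h11, show g + g = 2 * g from (two_mul g).symm, pow_mul]
    norm_num
  · intro x _ hx
    rw [h4, h5 x hx, mul_zero]
  · intro h; exact absurd (Finset.mem_univ _) h
end

section
/- Let n, g ≥ 0, let A be a symmetric n×n integer matrix, B a symmetric 2g×2g integer matrix, C an arbitrary n×2g integer matrix, and J_g the standard symplectic 2g×2g integer matrix. Form the symmetric (n+4g)×(n+4g) block matrix M = [[A, C, 0], [Cᵀ, B, J_g], [0, J_gᵀ, 0]]. Then the Monsky sums satisfy λ(M) = 4^g · λ(A). In particular, the Brown invariant of φ_M equals the Brown invariant of φ_A. (This is the algebraic content of the chromatic duality theorem relating the two Brown invariants of a link.) -/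
open Matrix

/-! Split `v = (x, y, z)` along the blocks. Since the off-diagonal blocks are transposes of each
other, every cross term occurs twice, so `i ^ q_M(x, y, z) = i ^ q_A(x) * i ^ q_B(y) *
(-1) ^ (x ⬝ C y + y ⬝ J z)`. Summing over `z` first, the character sum `∑_z (-1) ^ (y ⬝ J z)`
is `4 ^ g` at `y = 0` and vanishes otherwise because `J` is invertible mod 2; what remains is
`4 ^ g * ∑_x i ^ q_A(x)`. -/

lemma zpow_sum₀ {G₀ : Type*} [CommGroupWithZero G₀] {a : G₀} (ha : a ≠ 0) {α : Type*}
    (s : Finset α) (f : α → ℤ) : a ^ (∑ i ∈ s, f i) = ∏ i ∈ s, a ^ f i := by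
  classical
  induction s using Finset.induction_on with
  | empty => simp
  | insert j s hj ih => rw [Finset.sum_insert hj, Finset.prod_insert hj, zpow_add₀ ha, ih]

section MonskySum

variable {ι κ : Type*}

lemma zlift_sumElim (x : ι → ZMod 2) (y : κ → ZMod 2) :
    zlift (Sum.elim x y) = Sum.elim (zlift x) (zlift y) := by
  ext (i | j) <;> rfl

@[simp]
lemma zlift_zero : zlift (0 : ι → ZMod 2) = 0 := rfl

lemma even_zlift_iff (v : ι → ZMod 2) (i : ι) : Even (zlift v i) ↔ v i = 0 := by
  unfold zlift
  generalize v i = a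
  revert a
  decide

variable [Fintype ι] [Fintype κ]

lemma qForm_eq_dotProduct_mulVec (M : Matrix ι ι ℤ) (v : ι → ZMod 2) :
    qForm M v = zlift v ⬝ᵥ M *ᵥ zlift v := by
  simp only [qForm, dotProduct, mulVec, Finset.mul_sum, mul_assoc]

lemma sumElim_dotProduct_fromBlocks_transpose_mulVec {R : Type*} [CommRing R]
    (A : Matrix ι ι R) (C : Matrix ι κ R) (B : Matrix κ κ R) (u : ι → R) (w : κ → R) :
    Sum.elim u w ⬝ᵥ fromBlocks A C Cᵀ B *ᵥ Sum.elim u w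
      = u ⬝ᵥ A *ᵥ u + 2 * (u ⬝ᵥ C *ᵥ w) + w ⬝ᵥ B *ᵥ w := by
  have hC : w ⬝ᵥ Cᵀ *ᵥ u = u ⬝ᵥ C *ᵥ w := by
    rw [mulVec_transpose, dotProduct_comm, dotProduct_mulVec]
  simp only [fromBlocks_mulVec, Sum.elim_comp_inl, Sum.elim_comp_inr,
    sumElim_dotProduct_sumElim, dotProduct_add, hC]
  ring

@[simp]
lemma qForm_zero (v : ι → ZMod 2) : qForm (0 : Matrix ι ι ℤ) v = 0 := by
  simp [qForm]

lemma qForm_fromBlocks_transpose (A : Matrix ι ι ℤ) (C : Matrix ι κ ℤ) (B : Matrix κ κ ℤ)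
    (x : ι → ZMod 2) (y : κ → ZMod 2) :
    qForm (fromBlocks A C Cᵀ B) (Sum.elim x y)
      = qForm A x + 2 * (zlift x ⬝ᵥ C *ᵥ zlift y) + qForm B y := by
  simp only [qForm_eq_dotProduct_mulVec, zlift_sumElim,
    sumElim_dotProduct_fromBlocks_transpose_mulVec]

lemma Fintype.sum_fun_sum_eq_sum_sumElim {γ M : Type*} [DecidableEq ι] [DecidableEq κ]
    [Fintype γ] [AddCommMonoid M] (F : (ι ⊕ κ → γ) → M) :
    ∑ v, F v = ∑ x, ∑ y, F (Sum.elim x y) := by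
  rw [← (Equiv.sumArrowEquivProdArrow ι κ γ).symm.sum_comp, Fintype.sum_prod_type]
  rfl

lemma I_zpow_add_two_mul (a b : ℤ) :
    Complex.I ^ (a + 2 * b) = Complex.I ^ a * (-1) ^ b := by
  rw [zpow_add₀ Complex.I_ne_zero, _root_.zpow_mul, zpow_two, Complex.I_mul_I]

lemma monsky_fromBlocks_transpose [DecidableEq ι] [DecidableEq κ] (A : Matrix ι ι ℤ)
    (C : Matrix ι κ ℤ) (B : Matrix κ κ ℤ) :
    monsky (fromBlocks A C Cᵀ B)
      = ∑ x, Complex.I ^ qForm A x *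
          ∑ y, (-1) ^ (zlift x ⬝ᵥ C *ᵥ zlift y) * Complex.I ^ qForm B y := by
  simp only [monsky, Fintype.sum_fun_sum_eq_sum_sumElim, qForm_fromBlocks_transpose,
    Finset.mul_sum]
  refine Finset.sum_congr rfl fun x _ => Finset.sum_congr rfl fun y _ => ?_
  rw [add_right_comm, I_zpow_add_two_mul, zpow_add₀ Complex.I_ne_zero]
  ring

lemma sum_neg_one_zpow_dotProduct_zlift [DecidableEq κ] (w : κ → ℤ) :
    ∑ z : κ → ZMod 2, (-1 : ℂ) ^ (w ⬝ᵥ zlift z)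
      = if ∀ j, Even (w j) then 2 ^ Fintype.card κ else 0 := by
  have parity (m : ℤ) : 1 + (-1 : ℂ) ^ m = if Even m then 2 else 0 := by
    rcases Int.even_or_odd m with hm | hm
    · rw [hm.neg_one_zpow, if_pos hm]; norm_num
    · rw [hm.neg_one_zpow, if_neg (Int.not_even_iff_odd.mpr hm)]; norm_num
  calc ∑ z : κ → ZMod 2, (-1 : ℂ) ^ (w ⬝ᵥ zlift z)
      = ∑ z : κ → ZMod 2, ∏ j, (-1 : ℂ) ^ (w j * zlift z j) := by
        simp only [dotProduct, zpow_sum₀ (by norm_num : (-1 : ℂ) ≠ 0)]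
    _ = ∏ j, ∑ a : ZMod 2, (-1 : ℂ) ^ (w j * a.val) := by rw [Fintype.prod_sum]; rfl
    _ = ∏ j, if Even (w j) then 2 else 0 := by
        refine Finset.prod_congr rfl fun j _ => ?_
        rw [show (Finset.univ : Finset (ZMod 2)) = {0, 1} from rfl, Finset.sum_pair zero_ne_one,
          ← parity]
        simp only [ZMod.val_zero, ZMod.val_one, Nat.cast_zero, Nat.cast_one, mul_zero, mul_one,
          zpow_zero]
    _ = _ := by rw [Fintype.prod_ite_zero, Finset.prod_const, Finset.card_univ]

end MonskySum

lemma vecMul_symplecticJ {g : ℕ} (a b : Fin g → ℤ) :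
    Sum.elim a b ᵥ* symplecticJ g = Sum.elim (-b) a := by
  simp [symplecticJ, vecMul_fromBlocks, vecMul_neg]

lemma sum_neg_one_zpow_symplecticJ (g : ℕ) (y : Fin g ⊕ Fin g → ZMod 2) :
    ∑ z, (-1 : ℂ) ^ (zlift y ⬝ᵥ symplecticJ g *ᵥ zlift z) = if y = 0 then 4 ^ g else 0 := by
  have key : (∀ j, Even ((zlift y ᵥ* symplecticJ g) j)) ↔ y = 0 := by
    rw [← Sum.elim_comp_inl_inr (zlift y), vecMul_symplecticJ, funext_iff, Sum.forall, Sum.forall,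
      and_comm]
    simp only [Sum.elim_inl, Sum.elim_inr, Pi.neg_apply, even_neg, Function.comp_apply,
      even_zlift_iff, Pi.zero_apply]
  simp only [dotProduct_mulVec, sum_neg_one_zpow_dotProduct_zlift, key, Fintype.card_sum,
    Fintype.card_fin, ← two_mul, pow_mul]
  norm_num

theorem monsky_chromatic_duality_general (n g : ℕ)
    (A : Matrix (Fin n) (Fin n) ℤ)
    (B : Matrix (Fin g ⊕ Fin g) (Fin g ⊕ Fin g) ℤ)
    (C : Matrix (Fin n) (Fin g ⊕ Fin g) ℤ) :
    monsky (Matrix.fromBlocks A (Matrix.fromCols C 0) (Matrix.fromRows Cᵀ 0)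
        (Matrix.fromBlocks B (symplecticJ g) (symplecticJ g)ᵀ 0))
      = 4 ^ g * monsky A := by
  have hCt : fromRows Cᵀ (0 : Matrix (Fin g ⊕ Fin g) (Fin n) ℤ) = (fromCols C 0)ᵀ := by
    rw [transpose_fromCols, transpose_zero]
  rw [hCt, monsky_fromBlocks_transpose, monsky, Finset.mul_sum]
  refine Finset.sum_congr rfl fun x _ => ?_
  rw [mul_comm]
  congr 1
  calc ∑ w, (-1 : ℂ) ^ (zlift x ⬝ᵥ fromCols C 0 *ᵥ zlift w)
        * Complex.I ^ qForm (fromBlocks B (symplecticJ g) (symplecticJ g)ᵀ 0) w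
      = ∑ y, (-1) ^ (zlift x ⬝ᵥ C *ᵥ zlift y) * Complex.I ^ qForm B y
          * ∑ z, (-1 : ℂ) ^ (zlift y ⬝ᵥ symplecticJ g *ᵥ zlift z) := by
        rw [Fintype.sum_fun_sum_eq_sum_sumElim]
        refine Finset.sum_congr rfl fun y _ => ?_
        rw [Finset.mul_sum]
        refine Finset.sum_congr rfl fun z _ => ?_
        rw [qForm_fromBlocks_transpose, qForm_zero, add_zero, I_zpow_add_two_mul, zlift_sumElim,
          fromCols_mulVec_sumElim, zero_mulVec, add_zero, mul_assoc]
    _ = 4 ^ g := by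
        simp [sum_neg_one_zpow_symplecticJ, qForm_eq_dotProduct_mulVec]

/-- algebraic chromatic duality. For a symmetric `n×n` integer matrix `A`,
a symmetric `2g×2g` integer matrix `B`, and any `n×2g` integer matrix `C`, the symmetric
block matrix `M = [[A, C, 0], [Cᵀ, B, J_g], [0, J_gᵀ, 0]]` satisfies `λ(M) = 4^g · λ(A)`;
in particular the Brown invariants of `φ_M` and `φ_A` agree. -/
theorem monsky_chromatic_duality (n g : ℕ)
    (A : Matrix (Fin n) (Fin n) ℤ) (hA : A.IsSymm)
    (B : Matrix (Fin g ⊕ Fin g) (Fin g ⊕ Fin g) ℤ) (hB : B.IsSymm)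
    (C : Matrix (Fin n) (Fin g ⊕ Fin g) ℤ) :
    monsky (Matrix.fromBlocks A (Matrix.fromCols C 0) (Matrix.fromRows Cᵀ 0)
        (Matrix.fromBlocks B (symplecticJ g) (symplecticJ g)ᵀ 0))
      = 4 ^ g * monsky A :=
  monsky_chromatic_duality_general n g A B C
end

section
/- Let M be a symmetric n×n integer matrix and let M̄ be its reduction mod 2. Then the Monsky sum λ(M) is nonzero if and only if the quadratic enhancement φ_M is proper, i.e., if and only if q_M(v) ≡ 0 (mod 4) for every v ∈ (ℤ/2)ⁿ lying in the kernel of M̄ (the radical of the mod-2 bilinear form). -/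
open Matrix

/-!
With `b(v, w) = vᵀ M̄ w`, the integer identity `q(v + w) ≡ q(v) + q(w) + 2 b(v, w) (mod 4)` shows
that `λ(M) · conj λ(M) = Σ_{v,w} i^{q(v+w) - q(v)} = Σ_w i^{q(w)} Σ_v (-1)^{b(v, w)}`, and the inner
character sum vanishes unless `w` lies in the radical `R`. Hence `|λ(M)|² = 2ⁿ Σ_{w ∈ R} i^{q(w)}`.
On `R` the map `q mod 4` is additive, so the last sum is a character sum over the group `R`: it is
nonzero exactly when the character is trivial, i.e. when `φ_M` is proper.
-/

lemma Matrix.IsSymm.dotProduct_mulVec_comm {ι R : Type*} [Fintype ι] [CommSemiring R]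
    {A : Matrix ι ι R} (hA : A.IsSymm) (x y : ι → R) : x ⬝ᵥ A *ᵥ y = y ⬝ᵥ A *ᵥ x := by
  rw [dotProduct_mulVec, ← hA, vecMul_transpose, dotProduct_comm, hA]

lemma sum_addChar_dotProduct {F ι : Type*} [Field F] [Fintype F] [Fintype ι] [DecidableEq ι]
    (φ : AddChar F ℂ) (hφ : φ ≠ 0) (c : ι → F) [Decidable (c = 0)] :
    ∑ v, φ (v ⬝ᵥ c) = if c = 0 then (Fintype.card (ι → F) : ℂ) else 0 := by
  let ψ : AddChar (ι → F) ℂ :=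
    φ.compAddMonoidHom (AddMonoidHom.mk' (· ⬝ᵥ c) fun u v => add_dotProduct u v c)
  have hψ : ψ = 0 ↔ c = 0 := by
    refine ⟨fun h => ?_, fun h => by ext v; simp [ψ, h]⟩
    by_contra hc
    obtain ⟨i, hi⟩ := Function.ne_iff.mp hc
    obtain ⟨a, ha⟩ := AddChar.ne_zero_iff.mp hφ
    have := congr($h (Pi.single i (a / c i)))
    simp only [ψ, AddChar.compAddMonoidHom_apply, AddMonoidHom.mk'_apply, single_dotProduct,
      div_mul_cancel₀ a hi, AddChar.zero_apply] at this
    exact ha this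
  simpa [ψ, hψ] using ψ.sum_eq_ite

noncomputable def iChar : AddChar (ZMod 4) ℂ := AddChar.zmodChar 4 Complex.I_pow_four

lemma iChar_injective : Function.Injective iChar := by
  refine AddChar.injective_iff.mpr fun a ha => ?_
  rw [iChar, AddChar.zmodChar_apply, Complex.isPrimitiveRoot_I.pow_eq_one_iff_dvd] at ha
  exact (ZMod.val_eq_zero a).mp (Nat.eq_zero_of_dvd_of_lt ha (ZMod.val_lt a))

lemma iChar_eq_one_iff {a : ZMod 4} : iChar a = 1 ↔ a = 0 :=
  iChar_injective.eq_iff' (AddChar.map_zero_eq_one iChar)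

lemma I_zpow_eq_iChar (m : ℤ) : Complex.I ^ m = iChar m := by
  have hval : ((m : ZMod 4).val : ℤ) = m % 4 := ZMod.val_intCast m
  calc Complex.I ^ m = Complex.I ^ (m % 4 + 4 * (m / 4)) := by rw [Int.emod_add_mul_ediv]
    _ = Complex.I ^ (m % 4) := by
      rw [zpow_add₀ Complex.I_ne_zero, _root_.zpow_mul, show (4 : ℤ) = (4 : ℕ) from rfl,
        zpow_natCast, Complex.I_pow_four, _root_.one_zpow, mul_one]
    _ = iChar m := by rw [← hval, zpow_natCast, iChar, AddChar.zmodChar_apply]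

def twoMulHom : ZMod 2 →+ ZMod 4 :=
  ZMod.lift 2 ⟨(Int.castAddHom (ZMod 4)).comp (AddMonoidHom.mulLeft 2), by decide⟩

lemma twoMulHom_intCast (a : ℤ) : twoMulHom a = 2 * (a : ZMod 4) := by
  simp [twoMulHom, ZMod.lift_coe]

lemma iChar_comp_twoMulHom_ne_zero : iChar.compAddMonoidHom twoMulHom ≠ 0 := by
  refine AddChar.ne_zero_iff.mpr ⟨1, fun h => ?_⟩
  have h2 : twoMulHom 1 = 2 := by simpa using twoMulHom_intCast 1
  rw [AddChar.compAddMonoidHom_apply, h2, ← AddChar.map_zero_eq_one iChar] at h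
  exact absurd (iChar_injective h) (by decide)

lemma zlift_add {ι : Type*} (u v : ι → ZMod 2) :
    zlift (u + v) = zlift u + zlift v - (2 : ℤ) • (zlift u * zlift v) := by
  funext i
  have h : ∀ a b : ZMod 2, ((a + b).val : ℤ) = a.val + b.val - 2 * (a.val * b.val) := by decide
  exact h (u i) (v i)

section QuadraticForm

variable {ι : Type*} [Fintype ι] (M : Matrix ι ι ℤ)

lemma qForm_eq_dotProduct (v : ι → ZMod 2) : qForm M v = zlift v ⬝ᵥ M *ᵥ zlift v := by
  simp only [qForm, dotProduct, mulVec, Finset.mul_sum, mul_assoc]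

lemma intCast_dotProduct_zlift (u v : ι → ZMod 2) :
    ((zlift u ⬝ᵥ M *ᵥ zlift v : ℤ) : ZMod 2) = u ⬝ᵥ M.map (Int.cast : ℤ → ZMod 2) *ᵥ v := by
  simp only [dotProduct, mulVec, zlift, Matrix.map_apply]
  push_cast
  simp only [ZMod.natCast_zmod_val]

variable {M}

lemma qForm_add (hM : M.IsSymm) (u v : ι → ZMod 2) :
    (qForm M (u + v) : ZMod 4) =
      qForm M u + qForm M v + twoMulHom (u ⬝ᵥ M.map (Int.cast : ℤ → ZMod 2) *ᵥ v) := by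
  set A := zlift u
  set B := zlift v
  set C := zlift u * zlift v
  have hexpand : qForm M (u + v) = qForm M u + qForm M v + 2 * (A ⬝ᵥ M *ᵥ B)
      + 4 * (C ⬝ᵥ M *ᵥ C - A ⬝ᵥ M *ᵥ C - B ⬝ᵥ M *ᵥ C) := by
    rw [qForm_eq_dotProduct, qForm_eq_dotProduct, qForm_eq_dotProduct, zlift_add]
    simp only [mulVec_add, mulVec_sub, mulVec_smul, add_dotProduct, sub_dotProduct,
      smul_dotProduct, dotProduct_add, dotProduct_sub, dotProduct_smul, smul_eq_mul]
    linear_combination hM.dotProduct_mulVec_comm B A - 2 * hM.dotProduct_mulVec_comm C A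
      - 2 * hM.dotProduct_mulVec_comm C B
  rw [hexpand, ← intCast_dotProduct_zlift, twoMulHom_intCast]
  push_cast
  rw [show (4 : ZMod 4) = 0 from rfl, zero_mul, add_zero]

end QuadraticForm

section Mod2Radical

variable {ι : Type*} [Fintype ι] (M : Matrix ι ι ℤ)

def mod2Radical : AddSubgroup (ι → ZMod 2) :=
  (M.map (Int.cast : ℤ → ZMod 2)).mulVecLin.ker.toAddSubgroup

lemma mem_mod2Radical {w : ι → ZMod 2} :
    w ∈ mod2Radical M ↔ M.map (Int.cast : ℤ → ZMod 2) *ᵥ w = 0 :=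
  Iff.rfl

instance : DecidablePred (· ∈ mod2Radical M) :=
  fun _ => decidable_of_iff _ (mem_mod2Radical M).symm

variable {M}

def qFormMod2Radical (hM : M.IsSymm) : mod2Radical M →+ ZMod 4 where
  toFun w := qForm M w
  map_zero' := by simp [qForm, zlift]
  map_add' u v := by
    rw [AddSubgroup.coe_add, qForm_add hM, (mem_mod2Radical M).mp v.2, dotProduct_zero, map_zero,
      add_zero]

lemma qFormMod2Radical_eq_zero_iff (hM : M.IsSymm) :
    qFormMod2Radical hM = 0 ↔
      ∀ v, M.map (Int.cast : ℤ → ZMod 2) *ᵥ v = 0 → (qForm M v : ZMod 4) = 0 := by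
  simp only [DFunLike.ext_iff, Subtype.forall, mem_mod2Radical]
  rfl

end Mod2Radical

lemma monsky_mul_conj {ι : Type*} [Fintype ι] [DecidableEq ι] {M : Matrix ι ι ℤ}
    (hM : M.IsSymm) :
    monsky M * starRingEnd ℂ (monsky M) =
      Fintype.card (ι → ZMod 2) * ∑ w : mod2Radical M, iChar (qFormMod2Radical hM w) := by
  have hmonsky : monsky M = ∑ v, iChar (qForm M v) := by simp only [monsky, I_zpow_eq_iChar]
  calc monsky M * starRingEnd ℂ (monsky M)
      = ∑ v, ∑ u, iChar (qForm M u - qForm M v) := by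
        simp only [hmonsky, map_sum, ← AddChar.map_neg_eq_conj, Finset.sum_mul_sum,
          sub_eq_add_neg, AddChar.map_add_eq_mul]
        exact Finset.sum_comm
    _ = ∑ v, ∑ w, iChar (qForm M (v + w) - qForm M v) :=
        Finset.sum_congr rfl fun v _ =>
          Equiv.sum_comp (Equiv.addLeft v) (fun u => iChar (qForm M u - qForm M v)) |>.symm
    _ = ∑ w, iChar (qForm M w) *
          ∑ v, iChar.compAddMonoidHom twoMulHom (v ⬝ᵥ M.map (Int.cast : ℤ → ZMod 2) *ᵥ w) := by
        rw [Finset.sum_comm]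
        refine Finset.sum_congr rfl fun w _ => ?_
        simp only [Finset.mul_sum, qForm_add hM, add_assoc, add_sub_cancel_left,
          AddChar.map_add_eq_mul, AddChar.compAddMonoidHom_apply]
    _ = ∑ w, iChar (qForm M w) *
          if M.map (Int.cast : ℤ → ZMod 2) *ᵥ w = 0 then (Fintype.card (ι → ZMod 2) : ℂ)
          else 0 := by
        simp only [sum_addChar_dotProduct _ iChar_comp_twoMulHom_ne_zero]
    _ = Fintype.card (ι → ZMod 2) * ∑ w : mod2Radical M, iChar (qFormMod2Radical hM w) := by
        change _ = _ * ∑ w : mod2Radical M, iChar (qForm M w)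
        rw [← Finset.sum_subtype _ (fun w => Finset.mem_filter_univ w) fun w => iChar (qForm M w),
          Finset.sum_filter, mul_comm, Finset.sum_mul]
        simp only [mul_ite, mul_zero, ite_mul, zero_mul, mem_mod2Radical]

/-- The Monsky sum `λ(M)` of a symmetric integer matrix `M` is nonzero iff the
quadratic enhancement `φ_M` is proper, i.e. iff `q_M(v) ≡ 0 (mod 4)` for every `v ∈ (ℤ/2)ⁿ` in
the kernel of `M` mod 2 (the radical of the mod-2 bilinear form). -/
theorem monsky_ne_zero_iff_proper {n : ℕ} (M : Matrix (Fin n) (Fin n) ℤ) (hM : M.IsSymm) :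
    monsky M ≠ 0 ↔
      ∀ v : Fin n → ZMod 2,
        (M.map (Int.cast : ℤ → ZMod 2)).mulVec v = 0 → ((qForm M v : ℤ) : ZMod 4) = 0 := by
  calc monsky M ≠ 0 ↔ monsky M * starRingEnd ℂ (monsky M) ≠ 0 := by simp
    _ ↔ ∑ w, iChar.compAddMonoidHom (qFormMod2Radical hM) w ≠ 0 := by
      rw [monsky_mul_conj hM, mul_ne_zero_iff, and_iff_right (by simp)]
      rfl
    _ ↔ iChar.compAddMonoidHom (qFormMod2Radical hM) = 0 := AddChar.sum_ne_zero_iff_eq_zero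
    _ ↔ qFormMod2Radical hM = 0 := by
      rw [AddChar.eq_zero_iff, DFunLike.ext_iff]
      simp only [AddChar.compAddMonoidHom_apply, iChar_eq_one_iff, AddMonoidHom.zero_apply]
    _ ↔ _ := qFormMod2Radical_eq_zero_iff hM
end
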